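/- Let A = ⟨Q, {a, b}⟩ be a completely reachable DFA with two input letters and |Q| > 1. Then every letter of A has defect at most 1, and at least one of the two letters has defect exactly 1. -/
import Mathlib


open Finset

/-- The action of a word (list of letters) on a state, applying letters left to right. -/
def act {Q A : Type*} (δ : Q → A → Q) (q : Q) (w : List A) : Q := w.foldl δ q

/-- The image of a set of states under the action of a word. -/
def img {Q A : Type*} [DecidableEq Q] (δ : Q → A → Q) (P : Finset Q) (w : List A) : Finset Q :=
  P.image (fun q => act δ q w)

/-- `excl δ w = Q \ Q·w`. -/
def excl {Q A : Type*} [Fintype Q] [DecidableEq Q] (δ : Q → A → Q) (w : List A) : Finset Q :=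
  Finset.univ \ img δ Finset.univ w

/-- `dupl δ w` : the set of states with at least two preimages under the action of `w`. -/
def dupl {Q A : Type*} [Fintype Q] [DecidableEq Q] (δ : Q → A → Q) (w : List A) : Finset Q :=
  Finset.univ.filter (fun p => ∃ q₁ q₂ : Q, q₁ ≠ q₂ ∧ act δ q₁ w = p ∧ act δ q₂ w = p)

/-- A DFA is completely reachable if every nonempty subset of states is the image of the
full state set under the action of some word. -/
def CompletelyReachable {Q A : Type*} [Fintype Q] [DecidableEq Q] (δ : Q → A → Q) : Prop :=
  ∀ P : Finset Q, P.Nonempty → ∃ w : List A, img δ Finset.univ w = P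

section Aux

variable {Q : Type*} [Fintype Q] [DecidableEq Q] (δ : Q → Bool → Q)

lemma img_append (P : Finset Q) (u v : List Bool) :
    img δ P (u ++ v) = img δ (img δ P u) v := by
  simp [img, Finset.image_image, act, List.foldl_append, Function.comp_def]

lemma img_nil (P : Finset Q) : img δ P [] = P := by simp [img, act]

lemma img_mono {P P' : Finset Q} (h : P ⊆ P') (w : List Bool) :
    img δ P w ⊆ img δ P' w := Finset.image_subset_image h

lemma card_img_le (P : Finset Q) (w : List Bool) : (img δ P w).card ≤ P.card :=
  Finset.card_image_le

lemma excl_card (w : List Bool) :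
    (excl δ w).card + (img δ Finset.univ w).card = Fintype.card Q := by
  rw [excl, Finset.card_sdiff_add_card_eq_card (Finset.subset_univ _), Finset.card_univ]

lemma card_img_of_mem (x : Bool) {w : List Bool} (hx : x ∈ w) :
    (img δ Finset.univ w).card ≤ (img δ Finset.univ [x]).card := by
  obtain ⟨u, v, rfl⟩ := List.append_of_mem hx
  have h1 : u ++ x :: v = (u ++ [x]) ++ v := by simp
  rw [h1, img_append]
  calc (img δ (img δ Finset.univ (u ++ [x])) v).card
      ≤ (img δ Finset.univ (u ++ [x])).card := card_img_le δ _ _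
    _ = (img δ (img δ Finset.univ u) [x]).card := by rw [img_append]
    _ ≤ (img δ Finset.univ [x]).card :=
        Finset.card_le_card (img_mono δ (Finset.subset_univ _) _)

lemma img_subset_last {w : List Bool} (hw : w ≠ []) {y : Bool} (hy : ∀ a ∈ w, a = y) :
    img δ Finset.univ w ⊆ img δ Finset.univ [y] := by
  obtain ⟨u, a, rfl⟩ := (w.eq_nil_or_concat).resolve_left hw
  have ha : a = y := hy a (by simp)
  rw [List.concat_eq_append, ha, img_append]
  exact img_mono δ (Finset.subset_univ _) _

lemma all_y_univ {y : Bool} (hy : img δ Finset.univ [y] = Finset.univ) :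
    ∀ w : List Bool, (∀ a ∈ w, a = y) → img δ Finset.univ w = Finset.univ := by
  intro w
  induction w with
  | nil => intro _; exact img_nil δ _
  | cons a v ih =>
    intro hall
    have ha : a = y := hall a (by simp)
    rw [show a :: v = [a] ++ v from rfl, img_append, ha, hy,
      ih (fun b hb => hall b (by simp [hb]))]

lemma defect_le_one (hQ : 1 < Fintype.card Q) (h : CompletelyReachable δ) (x : Bool) :
    (excl δ [x]).card ≤ 1 := by
  by_contra hc
  push_neg at hc
  have himg : (img δ Finset.univ [x]).card + 2 ≤ Fintype.card Q := by
    have := excl_card δ [x]; omega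
  obtain ⟨p, q, hpq⟩ := Fintype.exists_pair_of_one_lt_card hQ
  set P₁ : Finset Q := Finset.univ \ {p} with hP₁
  set P₂ : Finset Q := Finset.univ \ {q} with hP₂
  have hcard1 : P₁.card = Fintype.card Q - 1 := by
    rw [hP₁, Finset.card_sdiff_of_subset (Finset.subset_univ _), Finset.card_univ,
      Finset.card_singleton]
  have hcard2 : P₂.card = Fintype.card Q - 1 := by
    rw [hP₂, Finset.card_sdiff_of_subset (Finset.subset_univ _), Finset.card_univ,
      Finset.card_singleton]
  obtain ⟨w₁, hw₁⟩ := h P₁ (Finset.card_pos.1 (by omega))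
  obtain ⟨w₂, hw₂⟩ := h P₂ (Finset.card_pos.1 (by omega))
  -- each wᵢ is nonempty and avoids x
  have key : ∀ (w : List Bool) (P : Finset Q), img δ Finset.univ w = P →
      P.card = Fintype.card Q - 1 → w ≠ [] ∧ ∀ a ∈ w, a = !x := by
    intro w P hwP hPc
    have hwne : w ≠ [] := by
      rintro rfl
      rw [img_nil] at hwP
      have : P.card = Fintype.card Q := by rw [← hwP, Finset.card_univ]
      omega
    refine ⟨hwne, fun a ha => ?_⟩
    by_contra hax
    have hax' : a = x := by cases a <;> cases x <;> simp_all
    have := card_img_of_mem δ x (hax' ▸ ha)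
    rw [hwP, hPc] at this
    omega
  obtain ⟨h1ne, h1a⟩ := key w₁ P₁ hw₁ hcard1
  obtain ⟨h2ne, h2a⟩ := key w₂ P₂ hw₂ hcard2
  set S : Finset Q := img δ Finset.univ [!x] with hS
  have hsub1 : P₁ ⊆ S := hw₁ ▸ img_subset_last δ h1ne h1a
  have hsub2 : P₂ ⊆ S := hw₂ ▸ img_subset_last δ h2ne h2a
  have hSuniv : S = Finset.univ := by
    apply Finset.eq_univ_of_forall
    intro r
    rcases eq_or_ne r p with rfl | hr
    · exact hsub2 (by simp [hP₂, hpq])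
    · exact hsub1 (by simp [hP₁, hr])
  have := all_y_univ δ hSuniv w₁ h1a
  rw [hw₁] at this
  have hpin : p ∈ P₁ := this ▸ Finset.mem_univ p
  simp [hP₁] at hpin

end Aux

/-- In a completely reachable DFA with two input letters and more than one state, every
letter has defect at most 1 and some letter has defect exactly 1. -/
theorem binary_letters_defect {Q : Type*} [Fintype Q] [DecidableEq Q]
    (δ : Q → Bool → Q) (hQ : 1 < Fintype.card Q) (h : CompletelyReachable δ) :
    (∀ x : Bool, (excl δ [x]).card ≤ 1) ∧ (∃ x : Bool, (excl δ [x]).card = 1) := by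
  refine ⟨fun x => defect_le_one δ hQ h x, ?_⟩
  by_contra hc
  push_neg at hc
  have h0 : ∀ x : Bool, img δ Finset.univ [x] = Finset.univ := by
    intro x
    have h1 := defect_le_one δ hQ h x
    have h2 := hc x
    have h3 := excl_card δ [x]
    apply Finset.eq_univ_of_card
    omega
  have hall : ∀ w : List Bool, img δ Finset.univ w = Finset.univ := by
    intro w
    induction w with
    | nil => exact img_nil δ _
    | cons a v ih => rw [show a :: v = [a] ++ v from rfl, img_append, h0, ih]
  obtain ⟨p, _, _⟩ := Fintype.exists_pair_of_one_lt_card hQ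
  obtain ⟨w, hw⟩ := h {p} (Finset.singleton_nonempty p)
  rw [hall w] at hw
  have : Fintype.card Q = 1 := by rw [← Finset.card_univ, hw, Finset.card_singleton]
  omega
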